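/- For all n ∈ ℕ and all 0 ≤ i, j ≤ n, the entries of L_n satisfy the closed-form formula L_n[i,j] = Σ_{α ∈ Q^I_{i,j}} ∏_{r=j}^{i−1} t_{r+1, α_{i−r}} (where the empty sum is 0 and the empty product is 1). -/

import Mathlib

/-- The heights of an `L^m_n`-path of order `n` (the abscissas `x i = m + i` are
determined, so only the heights `y i ∈ {0, …, n}`, encoded as `Fin (n+1)`, are recorded):
`y (k+1) ∈ {y k, y k - 1}` and a fall step at position `k` forces `y k ≥ n - k`. -/
def IsLPath (n : ℕ) (y : Fin (n + 1) → Fin (n + 1)) : Prop :=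
  ∀ k : Fin n,
    ((y k.succ = y k.castSucc ∨ (y k.succ : ℕ) + 1 = (y k.castSucc : ℕ)) ∧
      ((y k.succ : ℕ) + 1 = (y k.castSucc : ℕ) → n - (k : ℕ) ≤ (y k.castSucc : ℕ)))

/-- The weight of an `L`-type path: a fall step from `(k, j)` to `(k+1, j-1)` has weight
`t j (k + j - n)` and a horizontal step has weight `1`; the weight of the path is the
product of the weights of its steps. -/
def lweight {R : Type*} [CommRing R] (n : ℕ) (t : ℕ → ℕ → R)
    (y : Fin (n + 1) → Fin (n + 1)) : R :=
  ∏ k : Fin n,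
    if (y k.succ : ℕ) + 1 = (y k.castSucc : ℕ)
    then t (y k.castSucc : ℕ) ((k : ℕ) + (y k.castSucc : ℕ) - n) else 1

open scoped Classical in
/-- The matrix `L n`: its `(i, j)` entry is the sum of the weights of all `L^0_n`-paths
with `y 0 = i` and `y n = j`. -/
noncomputable def Lmat {R : Type*} [CommRing R] (n : ℕ) (t : ℕ → ℕ → R) :
    Matrix (Fin (n + 1)) (Fin (n + 1)) R :=
  Matrix.of fun i j =>
    ∑ y ∈ Finset.univ.filter
        (fun y : Fin (n + 1) → Fin (n + 1) => IsLPath n y ∧ y 0 = i ∧ y (Fin.last n) = j),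
      lweight n t y

open scoped Classical in
/-- `Q^I_{i,j}`: for `i ≥ j`, the weakly increasing sequences `α₁ ≤ … ≤ α_{i-j}` of
nonnegative integers with `αᵣ ≤ i - r` (here zero-indexed, so `α k ≤ i - (k+1)`; the
values are encoded in `Fin (i+1)`); for `i = j` only the empty sequence, and for `i < j`
the empty set. -/
noncomputable def QIset (i j : ℕ) : Finset (Fin (i - j) → Fin (i + 1)) :=
  if j ≤ i then
    Finset.univ.filter
      (fun α => Monotone α ∧ ∀ r : Fin (i - j), (α r : ℕ) ≤ i - ((r : ℕ) + 1))
  else ∅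

/-
A path from height `i` to height `j` falls exactly once from each height in `(j, i]`, so it is
determined by its set of fall times; the fall from height `i - q` at time `k` is allowed iff
`n ≤ k + (i - q)` and has weight `t (i - q) (k + (i - q) - n)`. Listing the fall times as
`k₀ < ⋯ < k_{d-1}` (`d = i - j`), the sequence `α q = k_q + (i - q) - n` is weakly increasing,
and `k_q < n` becomes `α q ≤ i - q - 1`; conversely `k_q = α q + q + (n - i)`. This matches the
paths with `Q^I_{i,j}` weight for weight.
-/

namespace LPath

open Finset

variable {n : ℕ}

lemma val_add_sub_le_of_strictMono {d m : ℕ} {e : Fin d → Fin m} (he : StrictMono e)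
    {a b : Fin d} (hab : a ≤ b) : (e a : ℕ) + (b - a) ≤ e b := by
  obtain ⟨k, hk⟩ := Nat.exists_eq_add_of_le (Fin.le_def.1 hab)
  induction k generalizing b with
  | zero => rw [show b = a from Fin.ext hk]; simp
  | succ k ih =>
    let c : Fin d := ⟨a + k, by omega⟩
    have hprev : (e a : ℕ) + (a + k - a) ≤ e c := ih (b := c) (Fin.le_def.2 (by simp [c])) rfl
    have hlt : (e c : ℕ) < e b := he (Fin.lt_def.2 (by simp [c]; omega))
    omega

def fallSet (y : Fin (n + 1) → Fin (n + 1)) : Finset (Fin n) :=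
  {k | (y k.succ : ℕ) + 1 = y k.castSucc}

def fallsBefore (F : Finset (Fin n)) (m : ℕ) : ℕ :=
  #(F.filter fun k : Fin n => (k : ℕ) < m)

def pathOfFalls (i : Fin (n + 1)) (F : Finset (Fin n)) : Fin (n + 1) → Fin (n + 1) :=
  fun m => ⟨i - fallsBefore F m, lt_of_le_of_lt (Nat.sub_le _ _) i.isLt⟩

lemma mem_fallSet {y : Fin (n + 1) → Fin (n + 1)} {k : Fin n} :
    k ∈ fallSet y ↔ (y k.succ : ℕ) + 1 = y k.castSucc := by
  simp [fallSet]

lemma fallsBefore_zero (F : Finset (Fin n)) : fallsBefore F 0 = 0 := by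
  simp [fallsBefore]

lemma fallsBefore_succ (F : Finset (Fin n)) (k : Fin n) :
    fallsBefore F (k + 1) = fallsBefore F k + if k ∈ F then 1 else 0 := by
  have hsplit : F.filter (fun x : Fin n => (x : ℕ) < k + 1) =
      F.filter (fun x : Fin n => (x : ℕ) < k) ∪ F.filter (· = k) := by
    ext x
    simp only [mem_filter, mem_union, ← and_or_left, Fin.ext_iff, Nat.lt_succ_iff_lt_or_eq]
  have hdisj : Disjoint (F.filter fun x : Fin n => (x : ℕ) < k) (F.filter (· = k)) :=
    disjoint_filter.2 fun x _ hlt heq => by subst heq; exact lt_irrefl _ hlt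
  rw [fallsBefore, hsplit, card_union_of_disjoint hdisj, filter_eq']
  split_ifs <;> simp [fallsBefore]

lemma fallsBefore_of_le (F : Finset (Fin n)) {m : ℕ} (hm : n ≤ m) : fallsBefore F m = #F := by
  rw [fallsBefore, filter_true_of_mem fun k _ => by omega]

lemma fallsBefore_le_card (F : Finset (Fin n)) (m : ℕ) : fallsBefore F m ≤ #F :=
  card_filter_le _ _

lemma fallsBefore_orderEmbOfFin {F : Finset (Fin n)} {d : ℕ} (h : #F = d) (q : Fin d) :
    fallsBefore F (F.orderEmbOfFin h q) = q := by
  set e := F.orderEmbOfFin h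
  have hF : F = univ.map e.toEmbedding := (map_orderEmbOfFin_univ F h).symm
  rw [fallsBefore, hF, filter_map, card_map]
  simp only [Function.comp_def, RelEmbedding.coe_toEmbedding, ← Fin.lt_def, OrderEmbedding.lt_iff_lt]
  rw [filter_gt_eq_Iio, Fin.card_Iio]

lemma lweight_eq_prod_fallSet {R : Type*} [CommRing R] (t : ℕ → ℕ → R)
    (y : Fin (n + 1) → Fin (n + 1)) :
    lweight n t y = ∏ k ∈ fallSet y, t (y k.castSucc) (k + y k.castSucc - n) := by
  rw [lweight, fallSet, prod_filter]

lemma val_add_fallsBefore_fallSet {y : Fin (n + 1) → Fin (n + 1)} (hy : IsLPath n y)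
    (m : Fin (n + 1)) : (y m : ℕ) + fallsBefore (fallSet y) m = y 0 := by
  induction m using Fin.induction with
  | zero => simp [fallsBefore_zero]
  | succ k ih =>
    have hstep := (hy k).1.imp (congrArg Fin.val) id
    rw [Fin.val_castSucc] at ih
    rw [Fin.val_succ, fallsBefore_succ]
    split_ifs with hk <;> rw [mem_fallSet] at hk <;> omega

lemma fallSet_pathOfFalls {i : Fin (n + 1)} {F : Finset (Fin n)} (hF : #F ≤ i) :
    fallSet (pathOfFalls i F) = F := by
  ext k
  have hle := fallsBefore_le_card F (k + 1)
  rw [mem_fallSet]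
  simp only [pathOfFalls, Fin.val_succ, Fin.val_castSucc, fallsBefore_succ] at hle ⊢
  split_ifs at hle ⊢ with hk <;> simp only [hk, iff_true, iff_false] <;> omega

lemma pathOfFalls_fallSet {y : Fin (n + 1) → Fin (n + 1)} (hy : IsLPath n y) :
    pathOfFalls (y 0) (fallSet y) = y := by
  funext m
  ext
  have := val_add_fallsBefore_fallSet hy m
  simp only [pathOfFalls]
  omega

lemma isLPath_pathOfFalls {i : Fin (n + 1)} {F : Finset (Fin n)}
    (hF : ∀ k ∈ F, n - k ≤ i - fallsBefore F k) (hcard : #F ≤ i) :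
    IsLPath n (pathOfFalls i F) := by
  intro k
  have hle := fallsBefore_le_card F (k + 1)
  simp only [pathOfFalls, Fin.val_succ, Fin.val_castSucc, fallsBefore_succ, Fin.ext_iff] at hle ⊢
  split_ifs at hle ⊢ with hk
  · have := hF k hk
    omega
  · omega

def admissibleFallSets (n i j : ℕ) : Finset (Finset (Fin n)) :=
  {F | #F + j = i ∧ ∀ k ∈ F, n - k ≤ i - fallsBefore F k}

def fallSetWeight {R : Type*} [CommMonoid R] (t : ℕ → ℕ → R) (i : ℕ) (F : Finset (Fin n)) : R :=
  ∏ k ∈ F, t (i - fallsBefore F k) (k + (i - fallsBefore F k) - n)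

lemma mem_admissibleFallSets {i j : ℕ} {F : Finset (Fin n)} :
    F ∈ admissibleFallSets n i j ↔ #F + j = i ∧ ∀ k ∈ F, n - k ≤ i - fallsBefore F k := by
  simp [admissibleFallSets]

lemma fallSet_mem_admissibleFallSets {y : Fin (n + 1) → Fin (n + 1)} (hy : IsLPath n y) :
    fallSet y ∈ admissibleFallSets n (y 0) (y (Fin.last n)) := by
  have hheight := val_add_fallsBefore_fallSet hy
  refine mem_admissibleFallSets.2 ⟨?_, fun k hk => ?_⟩
  · have := hheight (Fin.last n)
    rw [Fin.val_last, fallsBefore_of_le _ le_rfl] at this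
    omega
  · have := hheight k.castSucc
    have hfall := (hy k).2 (mem_fallSet.1 hk)
    rw [Fin.val_castSucc] at this
    omega

lemma Lmat_apply_eq_sum_admissibleFallSets {R : Type*} [CommRing R] (t : ℕ → ℕ → R)
    (i j : Fin (n + 1)) :
    Lmat n t i j = ∑ F ∈ admissibleFallSets n i j, fallSetWeight t i F := by
  classical
  rw [Lmat, Matrix.of_apply]
  refine sum_nbij' fallSet (pathOfFalls i) ?_ ?_ ?_ ?_ ?_
  · intro y hy
    rw [mem_filter] at hy
    obtain ⟨-, hy, rfl, rfl⟩ := hy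
    exact fallSet_mem_admissibleFallSets hy
  · intro F hF
    obtain ⟨hcard, hF⟩ := mem_admissibleFallSets.1 hF
    rw [mem_filter]
    refine ⟨mem_univ _, isLPath_pathOfFalls hF (by omega), ?_, ?_⟩ <;> ext
    · simp [pathOfFalls, fallsBefore_zero]
    · simp only [pathOfFalls, Fin.val_last, fallsBefore_of_le _ le_rfl]
      omega
  · intro y hy
    rw [mem_filter] at hy
    obtain ⟨-, hy, rfl, -⟩ := hy
    exact pathOfFalls_fallSet hy
  · intro F hF
    exact fallSet_pathOfFalls (by have := (mem_admissibleFallSets.1 hF).1; omega)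
  · intro y hy
    rw [mem_filter] at hy
    obtain ⟨-, hy, rfl, -⟩ := hy
    rw [lweight_eq_prod_fallSet, fallSetWeight]
    refine prod_congr rfl fun k _ => ?_
    have := val_add_fallsBefore_fallSet hy k.castSucc
    rw [Fin.val_castSucc] at this
    rw [show (y k.castSucc : ℕ) = y 0 - fallsBefore (fallSet y) k by omega]

lemma mem_QIset {i j : ℕ} {α : Fin (i - j) → Fin (i + 1)} :
    α ∈ QIset i j ↔ j ≤ i ∧ Monotone α ∧ ∀ r : Fin (i - j), (α r : ℕ) ≤ i - (r + 1) := by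
  unfold QIset
  split_ifs with hji <;> simp [hji]

-- The `q`-th fall, from height `i - q` at time `k`, has weight `t (i - q) (k + (i - q) - n)`.
def seqOfFallSet (i : ℕ) {d : ℕ} (F : Finset (Fin n)) (h : #F = d) : Fin d → Fin (i + 1) :=
  fun q => ⟨(F.orderEmbOfFin h q : ℕ) + (i - q) - n, by have := (F.orderEmbOfFin h q).isLt; omega⟩

def fallSetOfSeq (n i : ℕ) {d : ℕ} (α : Fin d → Fin (i + 1)) : Finset (Fin n) :=
  {k | ∃ q, (k : ℕ) = α q + q + (n - i)}

lemma fallSetWeight_eq_prod_seqOfFallSet {R : Type*} [CommMonoid R] (t : ℕ → ℕ → R) (i : ℕ)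
    {d : ℕ} {F : Finset (Fin n)} (h : #F = d) :
    fallSetWeight t i F = ∏ q : Fin d, t (i - q) (seqOfFallSet i F h q) := by
  rw [fallSetWeight]
  conv_lhs => rw [← map_orderEmbOfFin_univ F h, prod_map]
  refine prod_congr rfl fun q _ => ?_
  simp only [RelEmbedding.coe_toEmbedding, map_orderEmbOfFin_univ, fallsBefore_orderEmbOfFin]
  rfl

lemma seqOfFallSet_mem_QIset {i j : ℕ} (hji : j ≤ i) {F : Finset (Fin n)} (h : #F = i - j) :
    seqOfFallSet i F h ∈ QIset i j := by
  refine mem_QIset.2 ⟨hji, fun a b hab => ?_, fun q => ?_⟩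
  · have := val_add_sub_le_of_strictMono (F.orderEmbOfFin h).strictMono hab
    simp only [seqOfFallSet, Fin.le_def] at hab ⊢
    omega
  · have := (F.orderEmbOfFin h q).isLt
    simp only [seqOfFallSet]
    omega

lemma le_orderEmbOfFin_of_mem_admissibleFallSets {i j d : ℕ} {F : Finset (Fin n)}
    (hF : F ∈ admissibleFallSets n i j) (h : #F = d) (q : Fin d) :
    n ≤ (F.orderEmbOfFin h q : ℕ) + (i - q) := by
  have := (mem_admissibleFallSets.1 hF).2 _ (orderEmbOfFin_mem F h q)
  rw [fallsBefore_orderEmbOfFin] at this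
  omega

lemma fallSetOfSeq_seqOfFallSet {i j : ℕ} (hi : i ≤ n) {F : Finset (Fin n)}
    (hF : F ∈ admissibleFallSets n i j) {d : ℕ} (h : #F = d) :
    fallSetOfSeq n i (seqOfFallSet i F h) = F := by
  ext k
  have hrange : k ∈ F ↔ ∃ q, F.orderEmbOfFin h q = k := by
    rw [← mem_coe, ← range_orderEmbOfFin F h, Set.mem_range]
  rw [hrange, fallSetOfSeq, mem_filter]
  simp only [mem_univ, true_and, seqOfFallSet]
  refine exists_congr fun q => ?_
  have := le_orderEmbOfFin_of_mem_admissibleFallSets hF h q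
  rw [Fin.ext_iff]
  omega

lemma orderEmbOfFin_fallSetOfSeq {i j : ℕ} (hi : i ≤ n) {α : Fin (i - j) → Fin (i + 1)}
    (hα : α ∈ QIset i j) :
    ∃ h : #(fallSetOfSeq n i α) = i - j,
      ∀ q, ((fallSetOfSeq n i α).orderEmbOfFin h q : ℕ) = α q + q + (n - i) := by
  obtain ⟨-, hmono, hbd⟩ := mem_QIset.1 hα
  let f : Fin (i - j) → Fin n := fun q => ⟨α q + q + (n - i), by have := hbd q; omega⟩
  have hf : StrictMono f := fun a b hab => by
    have := hmono hab.le
    simp only [f, Fin.lt_def, Fin.le_def] at hab this ⊢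
    omega
  have himage : fallSetOfSeq n i α = univ.image f := by
    ext k
    simp [fallSetOfSeq, f, Fin.ext_iff, eq_comm]
  have hcard : #(fallSetOfSeq n i α) = i - j := by
    rw [himage, card_image_of_injective _ hf.injective, card_fin]
  refine ⟨hcard, fun q => ?_⟩
  rw [← orderEmbOfFin_unique hcard (fun q => himage ▸ mem_image_of_mem f (mem_univ q)) hf]

lemma fallSetOfSeq_mem_admissibleFallSets {i j : ℕ} (hi : i ≤ n)
    {α : Fin (i - j) → Fin (i + 1)} (hα : α ∈ QIset i j) :
    fallSetOfSeq n i α ∈ admissibleFallSets n i j := by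
  obtain ⟨h, he⟩ := orderEmbOfFin_fallSetOfSeq hi hα
  refine mem_admissibleFallSets.2 ⟨by have := (mem_QIset.1 hα).1; omega, fun k hk => ?_⟩
  obtain ⟨q, rfl⟩ : ∃ q, (fallSetOfSeq n i α).orderEmbOfFin h q = k := by
    rw [← Set.mem_range, range_orderEmbOfFin]
    exact hk
  rw [fallsBefore_orderEmbOfFin, he]
  omega

lemma seqOfFallSet_fallSetOfSeq {i j : ℕ} (hi : i ≤ n) {α : Fin (i - j) → Fin (i + 1)}
    (hα : α ∈ QIset i j) (h : #(fallSetOfSeq n i α) = i - j) :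
    seqOfFallSet i (fallSetOfSeq n i α) h = α := by
  obtain ⟨_, he⟩ := orderEmbOfFin_fallSetOfSeq hi hα
  funext q
  ext
  simp only [seqOfFallSet, he]
  omega

lemma sum_admissibleFallSets_eq_sum_QIset {R : Type*} [CommSemiring R] (t : ℕ → ℕ → R)
    {i : ℕ} (hi : i ≤ n) (j : ℕ) :
    ∑ F ∈ admissibleFallSets n i j, fallSetWeight t i F =
      ∑ α ∈ QIset i j, ∏ q : Fin (i - j), t (i - q) (α q) := by
  have hcard {F : Finset (Fin n)} (hF : F ∈ admissibleFallSets n i j) : #F = i - j := by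
    have := (mem_admissibleFallSets.1 hF).1
    omega
  refine sum_bij' (fun F hF => seqOfFallSet i F (hcard hF)) (fun α _ => fallSetOfSeq n i α)
    (fun F hF => seqOfFallSet_mem_QIset (by have := (mem_admissibleFallSets.1 hF).1; omega) _)
    (fun α hα => fallSetOfSeq_mem_admissibleFallSets hi hα)
    (fun F hF => fallSetOfSeq_seqOfFallSet hi hF _)
    (fun α hα => seqOfFallSet_fallSetOfSeq hi hα _)
    (fun _ _ => fallSetWeight_eq_prod_seqOfFallSet t i _)

end LPath

-- The paper's factor for `r ∈ [j, i)` is the factor for `q = i - r - 1` here.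
theorem stmt9 {R : Type*} [CommRing R] (n : ℕ) (t : ℕ → ℕ → R) (i j : Fin (n + 1)) :
    Lmat n t i j =
      ∑ α ∈ QIset (i : ℕ) (j : ℕ),
        ∏ q : Fin ((i : ℕ) - (j : ℕ)), t ((i : ℕ) - (q : ℕ)) (α q : ℕ) := by
  rw [LPath.Lmat_apply_eq_sum_admissibleFallSets,
    LPath.sum_admissibleFallSets_eq_sum_QIset t i.is_le]
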